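/- For any 1 ≤ s < s' ≤ r and any subset A ⊆ [q] with A ⊉ [l] such that |A ∩ [l]| = l−2 and l+1 ∈ A, one has (σ_{e_s}σ_{e_{s'}} + σ_{e_{s'}}σ_{e_s})(ε_A) = 0 in the pivot resolution T_{1,…,l}. -/

import Mathlib

/-!
On `ε_A` the map `σ_{e_s}` is given by formula (i), and on each `ε_{A ∪ {j}}` by (i) or, when
`j ∈ [l]`, by (ii) (the correction term of (iii) never occurs because `l+1 ∈ A`). Hence
`σ_{e_{s'}} σ_{e_s} (ε_A)` is the sum over ordered pairs `(j, j')` of distinct indices outside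
`A`, not both in `[l]`, of
`sign(j,A) sign(j',A∪{j}) a_{sj} a_{s'j'} (m_j m_{j'} m_A / m_{A∪{j,j'}}) ε_{A∪{j,j'}}`.
The index condition and the monomial are symmetric in `j, j'`, while the sign changes under
the swap, so the pair `(j, j')` of one composite cancels `(j', j)` of the other.
-/

open MvPolynomial Finset

noncomputable section

/-- `fsign A B` is `0` if `A ∩ B ≠ ∅`, and otherwise `(−1)^{p(A,B)}` where `p(A,B)`
is the number of pairs `(a,b) ∈ A × B` with `a > b`. -/
def fsign {α : Type*} [LinearOrder α] [DecidableEq α] (A B : Finset α) : ℤ :=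
  if A ∩ B = ∅ then (-1 : ℤ) ^ (((A ×ˢ B).filter fun p => p.2 < p.1).card) else 0

/-- The total module underlying the Taylor complex: free over `Q = k[x_1,…,x_n]`
with basis `ε_τ` indexed by all subsets `τ ⊆ [q]`. -/
abbrev TotMod (k : Type*) [Field k] (n q : ℕ) : Type _ :=
  Finset (Fin q) →₀ MvPolynomial (Fin n) k

/-- `m_τ = lcm{m_i : i ∈ τ}`, where `m_i` is the monomial with exponent vector `D i`. -/
def lcmMono (k : Type*) [Field k] (n q : ℕ) (D : Fin q → (Fin n →₀ ℕ))
    (τ : Finset (Fin q)) : MvPolynomial (Fin n) k :=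
  monomial (τ.sup D) (1 : k)

/-- The monomial ideal `I = (m_1, …, m_q)`. -/
def monIdeal (k : Type*) [Field k] (n q : ℕ) (D : Fin q → (Fin n →₀ ℕ)) :
    Ideal (MvPolynomial (Fin n) k) :=
  Ideal.span (Set.range fun i => monomial (D i) (1 : k))

/-- The Taylor differential `∂(ε_τ) = Σ_{j∈τ} sign(j, τ∖{j}) (m_τ/m_{τ∖{j}}) ε_{τ∖{j}}`,
as a linear endomorphism of the total module. -/
def taylorD (k : Type*) [Field k] (n q : ℕ) (D : Fin q → (Fin n →₀ ℕ)) :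
    TotMod k n q →ₗ[MvPolynomial (Fin n) k] TotMod k n q :=
  Finsupp.linearCombination _ fun τ =>
    ∑ j ∈ τ, Finsupp.single (τ \ {j})
      ((fsign {j} (τ \ {j}) : MvPolynomial (Fin n) k) *
        monomial (τ.sup D - (τ \ {j}).sup D) (1 : k))

/-- The degree-`i` piece of the subcomplex of the Taylor complex spanned by the
`ε_τ` with `τ ∈ Ω`: the free submodule with basis `{ε_τ : τ ∈ Ω, |τ| = i}`. -/
def piece (k : Type*) [Field k] (n q : ℕ) (Ω : Set (Finset (Fin q))) (i : ℕ) :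
    Submodule (MvPolynomial (Fin n) k) (TotMod k n q) :=
  Finsupp.supported _ _ {τ | τ ∈ Ω ∧ τ.card = i}

/-- The subcomplex of the Taylor complex spanned by all `ε_τ` with `τ ∈ Ω`. -/
def subcx (k : Type*) [Field k] (n q : ℕ) (Ω : Set (Finset (Fin q))) :
    Submodule (MvPolynomial (Fin n) k) (TotMod k n q) :=
  Finsupp.supported _ _ Ω

/-- The index family of the pivot complex `T_S`: all `τ` with `τ ⊉ S`. -/
def pivotΩ {q : ℕ} (S : Finset (Fin q)) : Set (Finset (Fin q)) := {τ | ¬ S ⊆ τ}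

/-- The subcomplex of the Taylor complex spanned by `{ε_τ : τ ∈ Ω}` is a resolution
of `Q/I`: it is exact in homological degrees `≥ 1`, and its zeroth homology is
identified with `Q/I` via the augmentation `ε_∅ ↦ 1`. -/
def IsResolutionOf (k : Type*) [Field k] (n q : ℕ) (D : Fin q → (Fin n →₀ ℕ))
    (Ω : Set (Finset (Fin q))) : Prop :=
  (∀ i : ℕ, ∀ x ∈ piece k n q Ω (i + 1), taylorD k n q D x = 0 →
      ∃ y ∈ piece k n q Ω (i + 2), taylorD k n q D y = x) ∧
  (∀ x ∈ piece k n q Ω 0,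
      (x (∅ : Finset (Fin q)) ∈ monIdeal k n q D ↔
        ∃ y ∈ piece k n q Ω 1, taylorD k n q D y = x))

/-- The Scarf set of `I`: all `t` such that there are two distinct subsets
`τ ≠ τ'` of `[q]` with `|τ| = t` and `m_τ = m_{τ'}`.  The Scarf number of `I`
is `sInf` of this set; `scarf(I) = ∞` corresponds to this set being empty. -/
def scarfSet (k : Type*) [Field k] (n q : ℕ) (D : Fin q → (Fin n →₀ ℕ)) : Set ℕ :=
  {t | ∃ τ τ' : Finset (Fin q), τ ≠ τ' ∧ τ.card = t ∧
        lcmMono k n q D τ = lcmMono k n q D τ'}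


/-- The index set `[l] = {1,…,l}`, realized as the first `l` elements of `Fin q`. -/
def Lset (q l : ℕ) : Finset (Fin q) :=
  Finset.univ.filter fun i => (i : ℕ) < l

/-- The pivot index `l+1`, realized as the element of `Fin q` with value `l`. -/
def pivElt (q l : ℕ) (hq : l < q) : Fin q := ⟨l, hq⟩

/-- The unique element `t` of `[l] ∖ A` (when it exists). -/
def tOf (q l : ℕ) (hq : l < q) (A : Finset (Fin q)) : Fin q :=
  if h : (Lset q l \ A).Nonempty then (Lset q l \ A).min' h else pivElt q l hq

/-- The sum `Σ_{j ∈ J} sign(j,A) a_{sj} (m_j m_A / m_{A∪{j}}) ε_{A∪{j}}`,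
where `c j = a_{sj}`. -/
def sigTerm (k : Type*) [Field k] (n q : ℕ) (D : Fin q → (Fin n →₀ ℕ))
    (c : Fin q → MvPolynomial (Fin n) k) (A J : Finset (Fin q)) : TotMod k n q :=
  ∑ j ∈ J, Finsupp.single (insert j A)
    ((fsign {j} A : MvPolynomial (Fin n) k) * c j *
      monomial (D j + A.sup D - (insert j A).sup D) (1 : k))

/-- The correction term
`(−1)^{l+1} sign(t,A) a_{st} Σ_{i∈[l]} sign(i, A∪{t}∖{i})
  (m_t m_A / m_{A∪{t}∪{l+1}∖{i}}) ε_{A∪{t}∪{l+1}∖{i}}`. -/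
def sigCorr (k : Type*) [Field k] (n q l : ℕ) (hq : l < q)
    (D : Fin q → (Fin n →₀ ℕ)) (c : Fin q → MvPolynomial (Fin n) k)
    (A : Finset (Fin q)) (t : Fin q) : TotMod k n q :=
  ∑ i ∈ Lset q l, Finsupp.single ((insert (pivElt q l hq) (insert t A)) \ {i})
    ((-1 : MvPolynomial (Fin n) k) ^ (l + 1) *
      (fsign {t} A : MvPolynomial (Fin n) k) * c t *
      (fsign {i} (insert t A \ {i}) : MvPolynomial (Fin n) k) *
      monomial (D t + A.sup D - ((insert (pivElt q l hq) (insert t A)) \ {i}).sup D)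
        (1 : k))

/-- The homotopy `σ_{e_s}` (for coefficients `c j = a_{sj}`), defined on basis
elements `ε_A` by the three-case formula of Theorem 5.1 of the paper. -/
def sigmaMap (k : Type*) [Field k] (n q l : ℕ) (hq : l < q)
    (D : Fin q → (Fin n →₀ ℕ)) (c : Fin q → MvPolynomial (Fin n) k) :
    TotMod k n q →ₗ[MvPolynomial (Fin n) k] TotMod k n q :=
  Finsupp.linearCombination _ fun A =>
    if (A ∩ Lset q l).card ≠ l - 1 then
      sigTerm k n q D c A Aᶜ
    else if pivElt q l hq ∈ A then
      sigTerm k n q D c A (insert (tOf q l hq A) A)ᶜ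
    else
      sigTerm k n q D c A (insert (tOf q l hq A) A)ᶜ +
        sigCorr k n q l hq D c A (tOf q l hq A)

/-- The element `a_s = Σ_{j=1}^q a_{sj} m_j`, for coefficients `c j = a_{sj}`. -/
def aElt (k : Type*) [Field k] (n q : ℕ) (D : Fin q → (Fin n →₀ ℕ))
    (c : Fin q → MvPolynomial (Fin n) k) : MvPolynomial (Fin n) k :=
  ∑ j : Fin q, c j * monomial (D j) (1 : k)
end

theorem fsign_singleton_of_notMem {α : Type*} [LinearOrder α] {j : α} {A : Finset α}
    (hj : j ∉ A) : fsign {j} A = (-1 : ℤ) ^ #{b ∈ A | b < j} := by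
  rw [fsign, if_pos (singleton_inter_of_notMem hj), singleton_product, filter_map, card_map]
  rfl

theorem fsign_mul_fsign_insert_add_swap {α : Type*} [LinearOrder α] {j j' : α} {A : Finset α}
    (hj : j ∉ A) (hj' : j' ∉ A) (hne : j ≠ j') :
    fsign {j} A * fsign {j'} (insert j A) + fsign {j'} A * fsign {j} (insert j' A) = 0 := by
  rw [fsign_singleton_of_notMem hj, fsign_singleton_of_notMem hj',
    fsign_singleton_of_notMem (by simp [hne.symm, hj']),
    fsign_singleton_of_notMem (by simp [hne, hj]), filter_insert, filter_insert]
  rcases hne.lt_or_gt with h | h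
  · rw [if_pos h, if_neg h.not_gt, card_insert_of_notMem (by simp [hj])]
    ring
  · rw [if_neg h.not_gt, if_pos h, card_insert_of_notMem (by simp [hj'])]
    ring

/-- The exponent of `m_j m_{j'} m_A / m_{A ∪ {j,j'}}`, written via `m_{A ∪ {j}}` as in two
successive applications of `σ`. -/
theorem tsub_sup_add_tsub_sup {ι : Type*} (x y a : ι →₀ ℕ) :
    (x + a - x ⊔ a) + (y + x ⊔ a - y ⊔ (x ⊔ a)) = x + y + a - y ⊔ (x ⊔ a) := by
  ext i
  simp only [Finsupp.add_apply, Finsupp.tsub_apply, Finsupp.sup_apply]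
  omega

theorem monomial_one_mul_monomial_one {σ R : Type*} [CommSemiring R] (s s' : σ →₀ ℕ) :
    monomial s (1 : R) * monomial s' 1 = monomial (s + s') 1 := by
  rw [monomial_mul, mul_one]

theorem card_Lset {q l : ℕ} (hq : l ≤ q) : #(Lset q l) = l := by
  rw [Lset, Fin.card_filter_val_lt, min_eq_right hq]

theorem Lset_sdiff_eq_singleton_tOf {q l : ℕ} (hq : l < q) {A : Finset (Fin q)}
    (hcard : #(A ∩ Lset q l) + 1 = l) : Lset q l \ A = {tOf q l hq A} := by
  have hone : #(Lset q l \ A) = 1 := by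
    have := card_inter_add_card_sdiff (Lset q l) A
    rw [inter_comm, card_Lset hq.le] at this
    omega
  obtain ⟨t, ht⟩ := card_eq_one.mp hone
  have hne : (Lset q l \ A).Nonempty := ⟨t, ht ▸ mem_singleton_self t⟩
  have htOf : tOf q l hq A ∈ Lset q l \ A := by
    rw [tOf, dif_pos hne]
    exact min'_mem _ _
  rw [ht, mem_singleton] at htOf
  rw [ht, htOf]

theorem compl_insert_tOf {q l : ℕ} (hq : l < q) {A : Finset (Fin q)}
    (hcard : #(A ∩ Lset q l) + 1 = l) :
    (insert (tOf q l hq A) A)ᶜ = {j ∈ Aᶜ | j ∉ Lset q l} := by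
  have hL := Lset_sdiff_eq_singleton_tOf hq hcard
  ext j
  have hj : j ∈ Lset q l ∧ j ∉ A ↔ j = tOf q l hq A := by
    rw [← mem_sdiff, hL, mem_singleton]
  simp only [mem_compl, mem_insert, mem_filter, not_or]
  tauto

section Sigma

variable {k : Type*} [Field k] {n q l : ℕ} (D : Fin q → (Fin n →₀ ℕ))

/-- The coefficient `sign(j,A) a_{sj} m_j m_A / m_{A∪{j}}` of `ε_{A∪{j}}` in `σ_{e_s}(ε_A)`,
for `c j = a_{sj}`. -/
noncomputable def sigCoef (c : Fin q → MvPolynomial (Fin n) k) (A : Finset (Fin q)) (j : Fin q) :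
    MvPolynomial (Fin n) k :=
  (fsign {j} A : MvPolynomial (Fin n) k) * c j *
    monomial (D j + A.sup D - (insert j A).sup D) (1 : k)

theorem sigTerm_eq_sum_sigCoef (c : Fin q → MvPolynomial (Fin n) k) (A J : Finset (Fin q)) :
    sigTerm k n q D c A J = ∑ j ∈ J, Finsupp.single (insert j A) (sigCoef D c A j) :=
  rfl

theorem sigCoef_mul_sigCoef (c c' : Fin q → MvPolynomial (Fin n) k) (A : Finset (Fin q))
    (j j' : Fin q) :
    sigCoef D c A j * sigCoef D c' (insert j A) j' =
      ((fsign {j} A * fsign {j'} (insert j A) : ℤ) : MvPolynomial (Fin n) k) * (c j * c' j') *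
        monomial (D j + D j' + A.sup D - (insert j' (insert j A)).sup D) (1 : k) := by
  have hexp := tsub_sup_add_tsub_sup (D j) (D j') (A.sup D)
  simp only [← sup_insert] at hexp
  simp only [sigCoef, Int.cast_mul]
  rw [← hexp, ← monomial_one_mul_monomial_one]
  ring

theorem sigCoef_mul_sigCoef_add_swap (c c' : Fin q → MvPolynomial (Fin n) k)
    {A : Finset (Fin q)} {j j' : Fin q} (hj : j ∉ A) (hj' : j' ∉ A) (hne : j ≠ j') :
    sigCoef D c A j * sigCoef D c' (insert j A) j' +
      sigCoef D c' A j' * sigCoef D c (insert j' A) j = 0 := by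
  have hsign := congrArg (Int.cast : ℤ → MvPolynomial (Fin n) k)
    (fsign_mul_fsign_insert_add_swap hj hj' hne)
  rw [Int.cast_add, Int.cast_zero] at hsign
  rw [sigCoef_mul_sigCoef, sigCoef_mul_sigCoef, insert_comm j' j, add_comm (D j') (D j)]
  linear_combination (c j * c' j' *
    monomial (D j + D j' + A.sup D - (insert j (insert j' A)).sup D) (1 : k)) * hsign

theorem sigmaMap_single_of_card_ne (hq : l < q) (c : Fin q → MvPolynomial (Fin n) k)
    {A : Finset (Fin q)} (hA : #(A ∩ Lset q l) ≠ l - 1) (p : MvPolynomial (Fin n) k) :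
    sigmaMap k n q l hq D c (Finsupp.single A p) = p • sigTerm k n q D c A Aᶜ := by
  rw [sigmaMap, Finsupp.linearCombination_single, if_pos hA]

theorem sigmaMap_single_of_pivElt_mem (hq : l < q) (c : Fin q → MvPolynomial (Fin n) k)
    {A : Finset (Fin q)} (hA : #(A ∩ Lset q l) + 1 = l) (hpiv : pivElt q l hq ∈ A)
    (p : MvPolynomial (Fin n) k) :
    sigmaMap k n q l hq D c (Finsupp.single A p) =
      p • sigTerm k n q D c A {j ∈ Aᶜ | j ∉ Lset q l} := by
  rw [sigmaMap, Finsupp.linearCombination_single, if_neg (by omega), if_pos hpiv,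
    compl_insert_tOf hq hA]

theorem sigmaMap_single_insert (hq : l < q) (hl : 2 ≤ l) (c : Fin q → MvPolynomial (Fin n) k)
    {A : Finset (Fin q)} (hcard : #(A ∩ Lset q l) = l - 2) (hpiv : pivElt q l hq ∈ A)
    {j : Fin q} (hj : j ∉ A) (p : MvPolynomial (Fin n) k) :
    sigmaMap k n q l hq D c (Finsupp.single (insert j A) p) =
      p • sigTerm k n q D c (insert j A)
        {j' ∈ (insert j A)ᶜ | ¬(j ∈ Lset q l ∧ j' ∈ Lset q l)} := by
  by_cases hjL : j ∈ Lset q l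
  · have hA : #(insert j A ∩ Lset q l) + 1 = l := by
      rw [insert_inter_of_mem hjL, card_insert_of_notMem (fun h => hj (mem_inter.1 h).1)]
      omega
    rw [sigmaMap_single_of_pivElt_mem D hq c hA (mem_insert_of_mem hpiv)]
    simp only [hjL, true_and]
  · have hA : #(insert j A ∩ Lset q l) ≠ l - 1 := by
      rw [insert_inter_of_notMem hjL]
      omega
    rw [sigmaMap_single_of_card_ne D hq c hA]
    simp only [hjL, false_and, not_false_eq_true, filter_true]

theorem sigmaMap_sigmaMap_single (hq : l < q) (hl : 2 ≤ l)
    (c c' : Fin q → MvPolynomial (Fin n) k)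
    {A : Finset (Fin q)} (hcard : #(A ∩ Lset q l) = l - 2) (hpiv : pivElt q l hq ∈ A) :
    sigmaMap k n q l hq D c' (sigmaMap k n q l hq D c (Finsupp.single A 1)) =
      ∑ j ∈ Aᶜ, ∑ j' ∈ Aᶜ,
        if j ≠ j' ∧ ¬(j ∈ Lset q l ∧ j' ∈ Lset q l) then
          Finsupp.single (insert j' (insert j A)) (sigCoef D c A j * sigCoef D c' (insert j A) j')
        else 0 := by
  rw [sigmaMap_single_of_card_ne D hq c (by omega), one_smul, sigTerm_eq_sum_sigCoef, map_sum]
  refine sum_congr rfl fun j hj => ?_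
  rw [sigmaMap_single_insert D hq hl c' hcard hpiv (mem_compl.1 hj), sigTerm_eq_sum_sigCoef,
    smul_sum, compl_insert, ← filter_ne, filter_filter, sum_filter]
  refine sum_congr rfl fun j' _ => ?_
  split_ifs <;> simp only [Finsupp.smul_single']

end Sigma

theorem sigma_anticomm_on_basis_codim_two_general {k : Type*} [Field k] {n q l : ℕ}
    (hl : 2 ≤ l) (hq : l < q)
    (D : Fin q → (Fin n →₀ ℕ))
    (r : ℕ) (a : Fin r → Fin q → MvPolynomial (Fin n) k)
    (s s' : Fin r) (A : Finset (Fin q))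
    (hcard : (A ∩ Lset q l).card = l - 2)
    (hpiv : pivElt q l hq ∈ A) :
    sigmaMap k n q l hq D (a s) (sigmaMap k n q l hq D (a s') (Finsupp.single A 1)) +
      sigmaMap k n q l hq D (a s') (sigmaMap k n q l hq D (a s) (Finsupp.single A 1)) =
    0 := by
  rw [sigmaMap_sigmaMap_single D hq hl (a s') (a s) hcard hpiv,
    sigmaMap_sigmaMap_single D hq hl (a s) (a s') hcard hpiv, sum_comm (s := Aᶜ),
    ← sum_add_distrib]
  refine sum_eq_zero fun j hj => ?_
  rw [← sum_add_distrib]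
  refine sum_eq_zero fun j' hj' => ?_
  have hsymm : (j' ≠ j ∧ ¬(j' ∈ Lset q l ∧ j ∈ Lset q l)) ↔
      (j ≠ j' ∧ ¬(j ∈ Lset q l ∧ j' ∈ Lset q l)) := by
    rw [ne_comm, and_comm (a := j' ∈ _)]
  simp only [hsymm]
  split_ifs with h
  · rw [insert_comm j j' A, ← Finsupp.single_add,
      sigCoef_mul_sigCoef_add_swap D _ _ (mem_compl.1 hj') (mem_compl.1 hj) h.1.symm,
      Finsupp.single_zero]
  · exact add_zero 0

/-- **Lemma 5.6 of the paper.**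
For any `1 ≤ s < s' ≤ r` and any `A ⊆ [q]` with `A ⊉ [l]`, `|A ∩ [l]| = l−2`
and `l+1 ∈ A`, one has `(σ_{e_s}σ_{e_{s'}} + σ_{e_{s'}}σ_{e_s})(ε_A) = 0` in the
pivot resolution `T_{1,…,l}`. -/
theorem sigma_anticomm_on_basis_codim_two {k : Type*} [Field k] {n q l : ℕ}
    (hl : 2 ≤ l) (hq : l < q)
    (D : Fin q → (Fin n →₀ ℕ))
    (hne : ∀ i : Fin q, D i ≠ 0)
    (hmin : ∀ i j : Fin q, i ≠ j → ¬ lcmMono k n q D {i} ∣ lcmMono k n q D {j})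
    (hgap : lcmMono k n q D {pivElt q l hq} ∣ lcmMono k n q D (Lset q l))
    (r : ℕ) (a : Fin r → Fin q → MvPolynomial (Fin n) k)
    (s s' : Fin r) (hss' : s < s') (A : Finset (Fin q))
    (hnsub : ¬ Lset q l ⊆ A) (hcard : (A ∩ Lset q l).card = l - 2)
    (hpiv : pivElt q l hq ∈ A) :
    sigmaMap k n q l hq D (a s) (sigmaMap k n q l hq D (a s') (Finsupp.single A 1)) +
      sigmaMap k n q l hq D (a s') (sigmaMap k n q l hq D (a s) (Finsupp.single A 1)) =
    0 :=
  sigma_anticomm_on_basis_codim_two_general hl hq D r a s s' A hcard hpiv
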